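/- Upper landscape inequality: Let C be a real symmetric N×N matrix with positive diagonal, nonpositive off-diagonal entries, and strict diagonal dominance. Set μ = 2·max_i C_ii, let (μI - C)‡ be the comparison matrix of μI - C, and define û by (μI - C)‡ û = 𝟙. Then for any eigenpair (λ, v) with Cv = λv, λ > 0, v ≠ 0, one has |v_i| / ‖v‖_∞ ≤ (μ - λ) û_i for each i. -/

import Mathlib

/-!
With `M = μ • 1 - C` one has `M *ᵥ v = (μ - λ) • v`, and for every vector `M‡ *ᵥ |v| ≤ |M *ᵥ v|`
entrywise (reverse triangle inequality on each row). Since `μ ≥ 2 C i i`, the matrix `M` is strictly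
diagonally dominant, so `M‡` is a Z-matrix with positive row sums and hence inverse-monotone:
`M‡ *ᵥ ((μ - λ) ‖v‖ • û - |v|) ≥ 0` forces `|v| ≤ (μ - λ) ‖v‖ • û`. Gershgorin's theorem gives `λ < μ`.
-/

open Matrix Finset

/-- The comparison matrix `A‡`: diagonal entries `|A i i|`, off-diagonal entries `-|A i j|`. -/
def compMat {N : ℕ} (A : Matrix (Fin N) (Fin N) ℝ) : Matrix (Fin N) (Fin N) ℝ :=
  fun i j => if i = j then |A i i| else -|A i j|

theorem Matrix.nonneg_of_nonneg_mulVec {ι R : Type*} [Fintype ι] [DecidableEq ι]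
    [CommRing R] [LinearOrder R] [IsStrictOrderedRing R] {B : Matrix ι ι R}
    (hoff : ∀ i j, i ≠ j → B i j ≤ 0) (hrow : ∀ i, 0 < ∑ j, B i j)
    {w : ι → R} (hBw : ∀ i, 0 ≤ (B *ᵥ w) i) (k : ι) : 0 ≤ w k := by
  obtain ⟨i, -, hmin⟩ := exists_min_image univ w ⟨k, mem_univ k⟩
  by_contra! hk
  have hwi : w i < 0 := (hmin k (mem_univ k)).trans_lt hk
  -- at a minimum of `w`, the nonpositive off-diagonal entries can only lower `(B *ᵥ w) i`
  have hle : (B *ᵥ w) i ≤ (∑ j, B i j) * w i := by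
    rw [mulVec, dotProduct, sum_mul]
    refine sum_le_sum fun j _ => ?_
    rcases eq_or_ne i j with rfl | hij
    · rfl
    · exact mul_le_mul_of_nonpos_left (hmin j (mem_univ j)) (hoff i j hij)
  linarith [hBw i, mul_neg_of_pos_of_neg (hrow i) hwi]

theorem compMat_apply_ne {N : ℕ} (A : Matrix (Fin N) (Fin N) ℝ) {i j : Fin N} (hij : i ≠ j) :
    compMat A i j = -|A i j| := if_neg hij

theorem sum_compMat_apply {N : ℕ} (A : Matrix (Fin N) (Fin N) ℝ) (i : Fin N) :
    ∑ j, compMat A i j = |A i i| - ∑ j ∈ univ.erase i, |A i j| := by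
  rw [← add_sum_erase _ _ (mem_univ i), compMat, if_pos rfl, sub_eq_add_neg, ← sum_neg_distrib]
  congr 1
  exact sum_congr rfl fun j hj => if_neg (ne_of_mem_erase hj).symm

theorem compMat_mulVec_abs_le {N : ℕ} (A : Matrix (Fin N) (Fin N) ℝ) (v : Fin N → ℝ)
    (i : Fin N) : (compMat A *ᵥ |v|) i ≤ |(A *ᵥ v) i| := by
  have hoff : |∑ j ∈ univ.erase i, A i j * v j| ≤ ∑ j ∈ univ.erase i, |A i j| * |v j| :=
    (abs_sum_le_sum_abs _ _).trans_eq (sum_congr rfl fun j _ => abs_mul _ _)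
  have hcomp : (compMat A *ᵥ |v|) i = |A i i| * |v i| - ∑ j ∈ univ.erase i, |A i j| * |v j| := by
    rw [mulVec, dotProduct, ← add_sum_erase _ _ (mem_univ i), compMat, if_pos rfl,
      sub_eq_add_neg, ← sum_neg_distrib]
    simp only [Pi.abs_apply]
    congr 1
    exact sum_congr rfl fun j hj => by rw [compMat_apply_ne A (ne_of_mem_erase hj).symm, neg_mul]
  have hA : (A *ᵥ v) i = A i i * v i + ∑ j ∈ univ.erase i, A i j * v j := by
    rw [mulVec, dotProduct, ← add_sum_erase _ _ (mem_univ i)]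
  rw [hcomp, hA, ← abs_mul]
  linarith [abs_sub_abs_le_abs_add (A i i * v i) (∑ j ∈ univ.erase i, A i j * v j)]

theorem abs_le_norm_mulVec_mul_of_compMat_mulVec_eq_one {N : ℕ} {A : Matrix (Fin N) (Fin N) ℝ}
    (hdom : ∀ i, ∑ j ∈ univ.erase i, |A i j| < |A i i|) {u : Fin N → ℝ}
    (hu : compMat A *ᵥ u = 1) (v : Fin N → ℝ) (i : Fin N) :
    |v i| ≤ ‖A *ᵥ v‖ * u i := by
  have hw : ∀ k, 0 ≤ (compMat A *ᵥ (‖A *ᵥ v‖ • u - |v|)) k := fun k => by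
    rw [mulVec_sub, mulVec_smul, hu, Pi.sub_apply, Pi.smul_apply, Pi.one_apply, smul_eq_mul,
      mul_one, sub_nonneg]
    exact (compMat_mulVec_abs_le A v k).trans (by simpa using norm_le_pi_norm (A *ᵥ v) k)
  have := nonneg_of_nonneg_mulVec (fun i j hij => (compMat_apply_ne A hij).trans_le
    (neg_nonpos.2 (abs_nonneg _))) (fun k => by rw [sum_compMat_apply]; linarith [hdom k]) hw i
  simpa [sub_nonneg] using this

theorem exists_eigenvalue_lt_two_mul_diag {ι : Type*} [Fintype ι] [DecidableEq ι]
    {C : Matrix ι ι ℝ} (hdom : ∀ i, ∑ j ∈ univ.erase i, |C i j| < C i i)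
    {lam : ℝ} {v : ι → ℝ} (hv : v ≠ 0) (heig : C *ᵥ v = lam • v) : ∃ k, lam < 2 * C k k := by
  have hlam : Module.End.HasEigenvalue (toLin' C) lam :=
    Module.End.hasEigenvalue_of_hasEigenvector
      ⟨Module.End.mem_eigenspace_iff.2 (by rwa [toLin'_apply]), hv⟩
  obtain ⟨k, hk⟩ := eigenvalue_mem_ball hlam
  rw [Metric.mem_closedBall, Real.dist_eq] at hk
  simp only [Real.norm_eq_abs] at hk
  exact ⟨k, by linarith [le_abs_self (lam - C k k), hdom k]⟩

theorem sum_erase_abs_smul_one_sub_lt {ι : Type*} [Fintype ι] [DecidableEq ι]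
    {C : Matrix ι ι ℝ} (hdom : ∀ i, ∑ j ∈ univ.erase i, |C i j| < C i i) {μ : ℝ}
    (hμ : ∀ i, 2 * C i i ≤ μ) (k : ι) :
    ∑ j ∈ univ.erase k, |(μ • (1 : Matrix ι ι ℝ) - C) k j| < |(μ • (1 : Matrix ι ι ℝ) - C) k k| := by
  have hoff : ∑ j ∈ univ.erase k, |(μ • (1 : Matrix ι ι ℝ) - C) k j|
      = ∑ j ∈ univ.erase k, |C k j| := sum_congr rfl fun j hj => by
    simp [one_apply_ne (ne_of_mem_erase hj).symm]
  have hdiag : (μ • (1 : Matrix ι ι ℝ) - C) k k = μ - C k k := by simp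
  have hsum_nonneg : 0 ≤ ∑ j ∈ univ.erase k, |C k j| := sum_nonneg fun j _ => abs_nonneg _
  rw [hoff, hdiag, abs_of_nonneg] <;> linarith [hdom k, hμ k]

theorem stmt_8_general {N : ℕ} [NeZero N] (C : Matrix (Fin N) (Fin N) ℝ)
    (hdom : ∀ i, ∑ j ∈ Finset.univ.erase i, |C i j| < C i i)
    (μ : ℝ) (hμ : μ = 2 * Finset.univ.sup' Finset.univ_nonempty (fun i => C i i))
    (uhat : Fin N → ℝ)
    (huhat : compMat (μ • (1 : Matrix (Fin N) (Fin N) ℝ) - C) *ᵥ uhat = 1)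
    (lam : ℝ) (v : Fin N → ℝ) (hv : v ≠ 0)
    (heig : C *ᵥ v = lam • v) (i : Fin N) :
    |v i| / ‖v‖ ≤ (μ - lam) * uhat i := by
  have hdiag_le : ∀ k, 2 * C k k ≤ μ := fun k => hμ ▸
    mul_le_mul_of_nonneg_left (le_sup' (fun i => C i i) (mem_univ k)) zero_le_two
  have hlam_lt : lam < μ := by
    obtain ⟨k, hk⟩ := exists_eigenvalue_lt_two_mul_diag hdom hv heig
    linarith [hdiag_le k]
  have hshift : (μ • (1 : Matrix (Fin N) (Fin N) ℝ) - C) *ᵥ v = (μ - lam) • v := by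
    rw [sub_mulVec, smul_mulVec, one_mulVec, heig, sub_smul]
  have hland := abs_le_norm_mulVec_mul_of_compMat_mulVec_eq_one
    (sum_erase_abs_smul_one_sub_lt hdom hdiag_le) huhat v i
  rw [hshift, norm_smul, Real.norm_of_nonneg (sub_nonneg.2 hlam_lt.le)] at hland
  rw [div_le_iff₀ (norm_pos_iff.2 hv)]
  linarith

theorem stmt_8 {N : ℕ} [NeZero N] (C : Matrix (Fin N) (Fin N) ℝ)
    (hsym : C.IsSymm) (hdiag : ∀ i, 0 < C i i)
    (hoff : ∀ i j, i ≠ j → C i j ≤ 0)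
    (hdom : ∀ i, ∑ j ∈ Finset.univ.erase i, |C i j| < C i i)
    (μ : ℝ) (hμ : μ = 2 * Finset.univ.sup' Finset.univ_nonempty (fun i => C i i))
    (uhat : Fin N → ℝ)
    (huhat : compMat (μ • (1 : Matrix (Fin N) (Fin N) ℝ) - C) *ᵥ uhat = 1)
    (lam : ℝ) (hlam : 0 < lam) (v : Fin N → ℝ) (hv : v ≠ 0)
    (heig : C *ᵥ v = lam • v) (i : Fin N) :
    |v i| / ‖v‖ ≤ (μ - lam) * uhat i :=
  stmt_8_general C hdom μ hμ uhat huhat lam v hv heig i
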